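/- arXiv:1407.2363 — 4 statements merged into one kernel-verified Lean document; each statement's English description precedes it below -/
import Mathlib

section
/- Let k be a field and let (M_n)_{n ∈ ℕ} be a countable family of nonzero k-vector spaces. Then the product vector space ∏_{n ∈ ℕ} M_n is not countably generated (i.e., has uncountable dimension over k). -/
/-!
Choosing a nonzero vector in each factor embeds `k^ℕ` linearly into `∏ n, M n`. By
Erdős–Kaplansky, `k^ℕ` has dimension `#k ^ ℵ₀ ≥ 2 ^ ℵ₀ > ℵ₀`, whereas a countably generated
space has dimension at most `ℵ₀`.
-/

open Cardinal

theorem Module.rank_le_aleph0_of_span_eq_top {R M : Type*} [Ring R] [StrongRankCondition R]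
    [AddCommGroup M] [Module R M] {S : Set M} (hS : S.Countable)
    (hspan : Submodule.span R S = ⊤) : Module.rank R M ≤ ℵ₀ := by
  rw [← rank_top, ← hspan]
  exact (rank_span_le S).trans hS.le_aleph0

theorem aleph0_lt_rank_fun_nat (K : Type*) [DivisionRing K] : ℵ₀ < Module.rank K (ℕ → K) := by
  rw [rank_fun_infinite, mk_arrow, mk_nat, lift_aleph0, lift_uzero]
  exact cantor' _ (one_lt_iff_nontrivial.mpr inferInstance)

theorem LinearMap.pi_smulRight_injective {R ι : Type*} {M : ι → Type*} [Ring R]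
    [IsCancelMulZero R] [∀ i, AddCommGroup (M i)] [∀ i, Module R (M i)]
    [∀ i, Module.IsTorsionFree R (M i)] {v : ∀ i, M i} (hv : ∀ i, v i ≠ 0) :
    Function.Injective
      (LinearMap.pi fun i ↦ (LinearMap.proj i : (ι → R) →ₗ[R] R).smulRight (v i)) :=
  fun _ _ h ↦ funext fun i ↦ smul_left_injective R (hv i) (congrFun h i)

theorem aleph0_lt_rank_pi_nat {K : Type*} [DivisionRing K] {M : ℕ → Type*}
    [∀ n, AddCommGroup (M n)] [∀ n, Module K (M n)] (hM : ∀ n, Nontrivial (M n)) :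
    ℵ₀ < Module.rank K (∀ n, M n) := by
  choose v hv using fun n ↦ exists_ne (0 : M n)
  have hle := LinearMap.lift_rank_le_of_injective _ (LinearMap.pi_smulRight_injective (R := K) hv)
  simpa using (lift_strictMono (aleph0_lt_rank_fun_nat K)).trans_le hle

/-- Let k be a field and (M n) a countable family of nonzero k-vector spaces.
Then the product vector space ∏ n, M n is not countably generated. -/
theorem product_not_countably_generated_field
    (k : Type*) [Field k] (M : ℕ → Type*)
    [∀ n, AddCommGroup (M n)] [∀ n, Module k (M n)]
    (hM : ∀ n, Nontrivial (M n)) :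
    ¬ ∃ S : Set (∀ n, M n), S.Countable ∧ Submodule.span k S = ⊤ := by
  rintro ⟨S, hS, hspan⟩
  exact (aleph0_lt_rank_pi_nat hM).not_ge (Module.rank_le_aleph0_of_span_eq_top hS hspan)
end

section
/- Let R be a commutative artinian ring and let (M_n)_{n ∈ ℕ} be a countable family of nonzero R-modules. Then the direct product ∏_{n ∈ ℕ} M_n is not countably generated as an R-module. -/
/-!
Modulo the nilpotent Jacobson radical, every nonzero module over an artinian ring is a nonzero
semisimple module, so it surjects onto a residue field `R ⧸ 𝔪`. There are only finitely many
maximal ideals, so a single `K = R ⧸ 𝔪` is such a quotient of infinitely many `M n`, and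
`∏ n, M n` surjects onto `T → K` with `T` infinite. A countable generating set would then span
`T → K` over `K`, but by Erdős–Kaplansky the dimension of `T → K` is its cardinality, which is
at least `2 ^ ℵ₀`.
-/

open Function Submodule Cardinal

namespace Module

def IsCountablyGenerated (R M : Type*) [Semiring R] [AddCommMonoid M] [Module R M] : Prop :=
  ∃ S : Set M, S.Countable ∧ span R S = ⊤

namespace IsCountablyGenerated

variable {R M : Type*} [Semiring R] [AddCommMonoid M] [Module R M]

theorem of_surjective {N : Type*} [AddCommMonoid N] [Module R N] (f : M →ₗ[R] N)
    (hf : Surjective f) (hM : IsCountablyGenerated R M) : IsCountablyGenerated R N := by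
  obtain ⟨S, hS, hspan⟩ := hM
  refine ⟨f '' S, hS.image f, ?_⟩
  rw [span_image, hspan, Submodule.map_top, LinearMap.range_eq_top.mpr hf]

theorem of_restrictScalars (A : Type*) [Semiring A] [Module A M] [SMul R A]
    [IsScalarTower R A M] (hM : IsCountablyGenerated R M) : IsCountablyGenerated A M := by
  obtain ⟨S, hS, hspan⟩ := hM
  exact ⟨S, hS, eq_top_iff.mpr fun x _ => span_le_restrictScalars R A S (hspan ▸ mem_top)⟩

end IsCountablyGenerated

theorem not_isCountablyGenerated_pi_of_infinite (K ι : Type*) [DivisionRing K] [Infinite ι] :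
    ¬ IsCountablyGenerated K (ι → K) := by
  rintro ⟨S, hS, hspan⟩
  have hcard : #(ι → K) ≤ ℵ₀ := by
    rw [← rank_fun_infinite, ← rank_top, ← hspan]
    exact (rank_span_le S).trans hS.le_aleph0
  refine hcard.not_gt ?_
  rw [mk_arrow]
  calc ℵ₀ < 2 ^ ℵ₀ := cantor ℵ₀
    _ ≤ lift #K ^ ℵ₀ :=
      power_le_power_right (by simpa using two_le_iff.mpr ⟨(0 : K), 1, zero_ne_one⟩)
    _ ≤ lift #K ^ lift #ι := power_le_power_left (by simp) (by simp [aleph0_le_mk ι])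

end Module

theorem Submodule.ideal_smul_top_ne_top_of_isNilpotent {R M : Type*} [CommSemiring R]
    [AddCommMonoid M] [Module R M] [Nontrivial M] {I : Ideal R} (hI : IsNilpotent I) :
    I • (⊤ : Submodule R M) ≠ ⊤ := by
  obtain ⟨k, hk⟩ := hI
  intro h
  have hpow : ∀ n : ℕ, I ^ n • (⊤ : Submodule R M) = ⊤ := by
    intro n
    induction n with
    | zero => simp
    | succ n ih => rw [pow_succ, Submodule.mul_smul, h, ih]
  exact bot_ne_top (α := Submodule R M) (by simpa [hk] using hpow k)

theorem IsSemiprimaryRing.exists_surjective_quotient_maximal (R M : Type*) [CommRing R]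
    [IsSemiprimaryRing R] [AddCommGroup M] [Module R M] [Nontrivial M] :
    ∃ m : Ideal R, m.IsMaximal ∧ ∃ f : M →ₗ[R] R ⧸ m, Surjective f := by
  set N := Ring.jacobson R • (⊤ : Submodule R M)
  have : Nontrivial (M ⧸ N) := Quotient.nontrivial_iff.mpr
    (ideal_smul_top_ne_top_of_isNilpotent (M := M) IsSemiprimaryRing.isNilpotent)
  have : IsSemisimpleModule R (M ⧸ N) :=
    (Module.isTorsionBySet_quotient_ideal_smul M _).isSemisimpleModule_iff.mp inferInstance
  obtain ⟨P, hP, -⟩ :=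
    (eq_top_or_exists_le_coatom (⊥ : Submodule R (M ⧸ N))).resolve_left bot_ne_top
  have : IsSimpleModule R (_ ⧸ P) := isSimpleModule_iff_isCoatom.mpr hP
  obtain ⟨m, hm, ⟨e⟩⟩ := isSimpleModule_iff_quot_maximal.mp this
  exact ⟨m, hm, e.toLinearMap ∘ₗ P.mkQ ∘ₗ N.mkQ,
    e.surjective.comp (P.mkQ_surjective.comp N.mkQ_surjective)⟩

theorem IsArtinianRing.exists_isMaximal_infinite_surjective_quotient (R : Type*) [CommRing R]
    [IsArtinianRing R] (M : ℕ → Type*) [∀ n, AddCommGroup (M n)] [∀ n, Module R (M n)]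
    [∀ n, Nontrivial (M n)] :
    ∃ m : Ideal R, m.IsMaximal ∧ ∃ T : Set ℕ, T.Infinite ∧
      ∀ n ∈ T, ∃ f : M n →ₗ[R] R ⧸ m, Surjective f := by
  have hcover : Set.univ ⊆ ⋃ m ∈ {m : Ideal R | m.IsMaximal},
      {n | ∃ f : M n →ₗ[R] R ⧸ m, Surjective f} := fun n _ => by
    obtain ⟨m, hm, hf⟩ := IsSemiprimaryRing.exists_surjective_quotient_maximal R (M n)
    exact Set.mem_biUnion hm hf
  obtain ⟨m, hm, hT⟩ : ∃ m ∈ {m : Ideal R | m.IsMaximal},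
      {n | ∃ f : M n →ₗ[R] R ⧸ m, Surjective f}.Infinite := by
    by_contra! h
    exact Set.infinite_univ (((setOfPred_isMaximal_finite R).biUnion h).subset hcover)
  exact ⟨m, hm, _, hT, fun n hn => hn⟩

theorem LinearMap.exists_surjective_pi_of_infinite {R ι : Type*} [Semiring R] {M : ι → Type*}
    [∀ i, AddCommMonoid (M i)] [∀ i, Module R (M i)] {N : Type*} [AddCommMonoid N] [Module R N]
    (T : Set ι) (hf : ∀ i ∈ T, ∃ f : M i →ₗ[R] N, Surjective f) :
    ∃ φ : (∀ i, M i) →ₗ[R] (T → N), Surjective φ := by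
  classical
  choose f hf using fun t : T => hf t t.2
  refine ⟨LinearMap.pi fun t => f t ∘ₗ LinearMap.proj (t : ι), fun y => ?_⟩
  choose v hv using fun t => hf t (y t)
  refine ⟨fun i => if h : i ∈ T then v ⟨i, h⟩ else 0, funext fun t => ?_⟩
  simp [t.2, hv]

/-- Let R be a commutative artinian ring and (M n) a countable family of nonzero
R-modules. Then ∏ n, M n is not countably generated as an R-module. -/
theorem product_not_countably_generated_artinian
    (R : Type*) [CommRing R] [IsArtinianRing R] (M : ℕ → Type*)
    [∀ n, AddCommGroup (M n)] [∀ n, Module R (M n)]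
    (hM : ∀ n, Nontrivial (M n)) :
    ¬ ∃ S : Set (∀ n, M n), S.Countable ∧ Submodule.span R S = ⊤ := by
  intro hcg
  obtain ⟨m, hm, T, hT, hf⟩ := IsArtinianRing.exists_isMaximal_infinite_surjective_quotient R M
  obtain ⟨φ, hφ⟩ := LinearMap.exists_surjective_pi_of_infinite T hf
  let := Ideal.Quotient.field m
  have := hT.to_subtype
  exact Module.not_isCountablyGenerated_pi_of_infinite (R ⧸ m) T
    ((Module.IsCountablyGenerated.of_surjective φ hφ hcg).of_restrictScalars _)
end

section
/- Let R be a ring and M a nonzero R-module whose endomorphism ring is local. If M ⊕ A ≅ M ⊕ B as R-modules, then A ≅ B. -/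
/-!
Let `f : M → M`, `h : M → B` be the `M`-column of `e`, and `f' : M → M`, `g' : B → M` the `M`-row
of `e⁻¹`. The `(M, M)` entry of `e⁻¹ ∘ e = 1` reads `f' f + g' h = 1` in the local ring `End M`.
If `f' f` is a unit then `f` is an automorphism (local rings are Dedekind-finite), and the Schur
complement of `f` is an isomorphism `A ≃ B`. If `g' h` is a unit then `h` is a split injection,
and composing `e` with the automorphism of `M × B` exchanging `M` and `h(M)` reduces to the first
case.
-/

instance IsLocalRing.isDedekindFiniteMonoid {S : Type*} [Ring S] [IsLocalRing S] :
    IsDedekindFiniteMonoid S where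
  mul_eq_one_symm {a b} hab := by
    have hidem : IsIdempotentElem (b * a) := by
      rw [IsIdempotentElem, mul_assoc, ← mul_assoc a, hab, one_mul]
    rcases IsLocalRing.isUnit_or_isUnit_of_add_one (add_sub_cancel (b * a) 1) with hba | hba
    · exact (IsIdempotentElem.iff_eq_one_of_isUnit hba).mp hidem
    · have hb : b = 0 := by
        refine hba.mul_right_eq_zero.mp ?_
        rw [sub_mul, one_mul, mul_assoc, hab, mul_one, sub_self]
      simp [hb] at hab

section

variable {R M N A B : Type*} [Ring R] [AddCommGroup M] [Module R M] [AddCommGroup N] [Module R N]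
  [AddCommGroup A] [Module R A] [AddCommGroup B] [Module R B]

theorem LinearEquiv.nonempty_equiv_of_bijective_fst_comp_inl (e : (M × A) ≃ₗ[R] (N × B))
    (hF : Function.Bijective (LinearMap.fst R N B ∘ₗ e.toLinearMap ∘ₗ LinearMap.inl R M A)) :
    Nonempty (A ≃ₗ[R] B) := by
  let F := LinearEquiv.ofBijective _ hF
  let g := LinearMap.fst R N B ∘ₗ e.toLinearMap ∘ₗ LinearMap.inr R M A
  let φ : A →ₗ[R] M × A := (-(F.symm.toLinearMap ∘ₗ g)).prod LinearMap.id
  have hfst : ∀ x : M × A, (e x).1 = F x.1 + g x.2 := fun x => by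
    simp [F, g, ← Prod.fst_add, ← map_add]
  have hφ : ∀ x : M × A, (e x).1 = 0 ↔ x = φ x.2 := fun x => by
    rw [hfst, add_eq_zero_iff_eq_neg, ← F.eq_symm_apply, Prod.ext_iff]
    simp [φ]
  refine ⟨.ofBijective (LinearMap.snd R N B ∘ₗ e.toLinearMap ∘ₗ φ) ⟨fun a a' h => ?_, fun b => ?_⟩⟩
  · have : e (φ a) = e (φ a') :=
      Prod.ext (by rw [(hφ _).mpr rfl, (hφ _).mpr rfl]) h
    simpa [φ] using congrArg Prod.snd (e.injective this)
  · obtain ⟨x, hx⟩ := e.surjective (0, b)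
    refine ⟨x.2, ?_⟩
    simp [← (hφ x).mp (by rw [hx]), hx]

end

section

variable {R M B : Type*} [Ring R] [AddCommGroup M] [Module R M] [AddCommGroup B] [Module R B]

/-- Writing `B = h(M) ⊕ ker α`, this swaps the two copies of `M` in `M × B`. -/
def LinearEquiv.prodExchangeOfLeftInverse (h : M →ₗ[R] B) (α : B →ₗ[R] M)
    (hα : α ∘ₗ h = LinearMap.id) : (M × B) ≃ₗ[R] (M × B) :=
  .ofInvolutive ((α ∘ₗ LinearMap.snd R M B).prod
      (LinearMap.snd R M B - h ∘ₗ α ∘ₗ LinearMap.snd R M B + h ∘ₗ LinearMap.fst R M B))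
    fun x => by
      have hαx : ∀ m, α (h m) = m := LinearMap.congr_fun hα
      ext <;> simp [hαx]

end

theorem cancellation_of_localEndRing_general
    (R M A B : Type*) [Ring R]
    [AddCommGroup M] [Module R M] [AddCommGroup A] [Module R A]
    [AddCommGroup B] [Module R B]
    [IsLocalRing (Module.End R M)]
    (e : (M × A) ≃ₗ[R] (M × B)) :
    Nonempty (A ≃ₗ[R] B) := by
  let f : Module.End R M := LinearMap.fst R M B ∘ₗ e.toLinearMap ∘ₗ LinearMap.inl R M A
  let h : M →ₗ[R] B := LinearMap.snd R M B ∘ₗ e.toLinearMap ∘ₗ LinearMap.inl R M A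
  let f' : Module.End R M := LinearMap.fst R M A ∘ₗ e.symm.toLinearMap ∘ₗ LinearMap.inl R M B
  let g' : B →ₗ[R] M := LinearMap.fst R M A ∘ₗ e.symm.toLinearMap ∘ₗ LinearMap.inr R M B
  have hsum : f' * f + g' ∘ₗ h = 1 := by
    ext m
    simp [f, h, f', g', ← Prod.fst_add, ← map_add]
  rcases IsLocalRing.isUnit_or_isUnit_of_add_one hsum with hf | ⟨u, hu⟩
  · exact e.nonempty_equiv_of_bijective_fst_comp_inl
      ((Module.End.isUnit_iff f).mp (isUnit_of_mul_isUnit_right hf))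
  · let α : B →ₗ[R] M := ↑u⁻¹ ∘ₗ g'
    have hα : α ∘ₗ h = LinearMap.id := by
      rw [LinearMap.comp_assoc, ← hu]
      exact u.inv_mul
    refine (e.trans (.prodExchangeOfLeftInverse h α hα)).nonempty_equiv_of_bijective_fst_comp_inl
      ?_
    convert Function.bijective_id
    ext m
    exact LinearMap.congr_fun hα m

/-- Cancellation for modules with local endomorphism ring: if End_R M is local
and M ⊕ A ≅ M ⊕ B, then A ≅ B. -/
theorem cancellation_of_localEndRing
    (R M A B : Type*) [Ring R]
    [AddCommGroup M] [Module R M] [AddCommGroup A] [Module R A]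
    [AddCommGroup B] [Module R B]
    [Nontrivial M] [IsLocalRing (Module.End R M)]
    (e : (M × A) ≃ₗ[R] (M × B)) :
    Nonempty (A ≃ₗ[R] B) :=
  cancellation_of_localEndRing_general R M A B e
end

section
/- Let R be a commutative noetherian domain of Krull dimension 1, (A_n)_{n ∈ ℕ} a countable family of nonzero ideals, and B a maximal ideal. For a fixed finitely generated R-module M with torsion-free submodule U ⊆ M such that M/U is torsion and annihilated by A (a nonzero ideal): if (C_n)_{n ∈ ℕ} enumerates all finite products of ideals from {A} ∪ {B^m : m ∈ ℕ}, then ⋂_{n ∈ ℕ} C_n M = 0. -/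
/-!
Since `A • M ⊆ U`, every `Bᵐ * A` among the `C n` gives `(Bᵐ * A) • M ⊆ Bᵐ • U`, so the
intersection lies in `⋂ₘ Bᵐ • U`. That intersection vanishes by Krull's intersection theorem
for the finitely generated torsion-free module `U` over the noetherian domain `R`.
-/

namespace Submodule

variable {R M : Type*} [CommRing R] [AddCommGroup M] [Module R M]

theorem isTorsionFree_of_smul_eq_zero [IsDomain R] (U : Submodule R M)
    (hU : ∀ r : R, r ≠ 0 → ∀ u ∈ U, r • u = 0 → u = 0) : Module.IsTorsionFree R U :=
  .of_smul_eq_zero fun r u hru =>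
    or_iff_not_imp_left.mpr fun hr => Subtype.ext (hU r hr u u.2 (congrArg Subtype.val hru))

theorem iInf_pow_smul_eq_bot_of_isTorsionFree [IsDomain R] [IsNoetherianRing R]
    {I : Ideal R} (hI : I ≠ ⊤) (U : Submodule R M) [Module.Finite R U]
    [Module.IsTorsionFree R U] : ⨅ i : ℕ, I ^ i • U = ⊥ := by
  have hmap : ∀ i : ℕ, I ^ i • U = (I ^ i • ⊤ : Submodule R U).map U.subtype := fun i => by
    rw [map_smul'', map_top, range_subtype]
  simp_rw [hmap, ← map_iInf _ U.injective_subtype, I.iInf_pow_smul_eq_bot_of_isTorsionFree hI,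
    map_bot]

theorem mul_smul_top_le_smul {I J : Ideal R} {U : Submodule R M} (hJ : J • ⊤ ≤ U) :
    (I * J) • (⊤ : Submodule R M) ≤ I • U := by
  rw [← smul_eq_mul, smul_assoc]
  exact smul_mono_right I hJ

end Submodule

theorem inf_enumerated_products_smul_eq_bot_general
    (R : Type*) [CommRing R] [IsDomain R] [IsNoetherianRing R]
    (M : Type*) [AddCommGroup M] [Module R M]
    (U : Submodule R M) (hUfg : U.FG)
    (hUtf : ∀ (r : R), r ≠ 0 → ∀ u ∈ U, r • u = 0 → u = 0)
    (A : Ideal R)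
    (hAann : ∀ a ∈ A, ∀ m : M, a • m ∈ U)
    (B : Ideal R) (hB : B.IsMaximal)
    (C : ℕ → Ideal R)
    (hCsurj : ∀ s : Multiset (Ideal R),
      (∀ J ∈ s, J = A ∨ ∃ m : ℕ, J = B ^ m) → ∃ n, C n = s.prod) :
    ⨅ n : ℕ, (C n • ⊤ : Submodule R M) = ⊥ := by
  have : Module.Finite R U := Module.Finite.iff_fg.mpr hUfg
  have := U.isTorsionFree_of_smul_eq_zero hUtf
  have hAU : A • ⊤ ≤ U := Submodule.smul_le.mpr fun a ha m _ => hAann a ha m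
  rw [eq_bot_iff, ← Submodule.iInf_pow_smul_eq_bot_of_isTorsionFree hB.ne_top U]
  refine le_iInf fun m => ?_
  obtain ⟨n, hn⟩ := hCsurj {B ^ m, A} (by simp)
  calc ⨅ n, C n • ⊤ ≤ C n • ⊤ := iInf_le _ n
    _ = (B ^ m * A) • ⊤ := by simp [hn]
    _ ≤ B ^ m • U := Submodule.mul_smul_top_le_smul hAU

/-- Let R be a commutative noetherian domain of Krull dimension 1 (not a field),
M a finitely generated module with a torsion-free submodule U such that M/U is
torsion and annihilated by a nonzero ideal A, and B a maximal ideal.  If (C n)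
enumerates all finite products of ideals taken from {A} ∪ {Bᵐ : m ∈ ℕ}, then
⋂ n, C n • M = 0. -/
theorem inf_enumerated_products_smul_eq_bot
    (R : Type*) [CommRing R] [IsDomain R] [IsNoetherianRing R]
    (hdim : ringKrullDim R = 1) (hnf : ¬ IsField R)
    (M : Type*) [AddCommGroup M] [Module R M] [Module.Finite R M]
    (U : Submodule R M) (hUfg : U.FG)
    (hUtf : ∀ (r : R), r ≠ 0 → ∀ u ∈ U, r • u = 0 → u = 0)
    (A : Ideal R) (hA : A ≠ ⊥)
    (hAann : ∀ a ∈ A, ∀ m : M, a • m ∈ U)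
    (B : Ideal R) (hB : B.IsMaximal)
    (C : ℕ → Ideal R)
    (hCmem : ∀ n, ∃ s : Multiset (Ideal R),
      (∀ J ∈ s, J = A ∨ ∃ m : ℕ, J = B ^ m) ∧ C n = s.prod)
    (hCsurj : ∀ s : Multiset (Ideal R),
      (∀ J ∈ s, J = A ∨ ∃ m : ℕ, J = B ^ m) → ∃ n, C n = s.prod) :
    ⨅ n : ℕ, (C n • ⊤ : Submodule R M) = ⊥ :=
  inf_enumerated_products_smul_eq_bot_general R M U hUfg hUtf A hAann B hB C hCsurj
end
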